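/- Let 𝒯 = (𝒳, π, 𝒮) be a hypergraph transformation and X ∈ 𝒳. Suppose X', X'' are hypergraphs with 𝒞(X') ⊆ 𝒞(X), V(X'') ∩ V(X ⊖ X') = ∅, and Y := (X ⊖ X') ⊕ X'' ∈ 𝒳. Suppose further that for every S ∈ 𝒮, S is component disjoint with both X' and X'', and π(S) is vertex disjoint with both X' and X''. Then 𝒟_Y = 𝒟_X and 𝒮_Y = 𝒮_X. -/

import Mathlib

open Classical

universe u

/-- A (finite) hypergraph over a vertex universe `V`: a finite vertex set together with a
finite set of nonempty hyperedges, each a subset of the vertex set. -/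
structure FinHypergraph (V : Type u) where
  verts : Set V
  edges : Set (Set V)
  verts_finite : verts.Finite
  edges_finite : edges.Finite
  edge_sub : ∀ e ∈ edges, e ⊆ verts
  edge_nonempty : ∀ e ∈ edges, e.Nonempty

namespace FinHypergraph

variable {V : Type u}

/-- The null hypergraph `𝒩`. -/
def Null : FinHypergraph V :=
  ⟨∅, ∅, Set.finite_empty, Set.finite_empty, by simp, by simp⟩

/-- Direct sum (hypergraph union) of two hypergraphs. -/
def dSum (X Y : FinHypergraph V) : FinHypergraph V where
  verts := X.verts ∪ Y.verts
  edges := X.edges ∪ Y.edges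
  verts_finite := X.verts_finite.union Y.verts_finite
  edges_finite := X.edges_finite.union Y.edges_finite
  edge_sub := by
    rintro e (he | he)
    · exact (X.edge_sub e he).trans Set.subset_union_left
    · exact (Y.edge_sub e he).trans Set.subset_union_right
  edge_nonempty := by
    rintro e (he | he)
    · exact X.edge_nonempty e he
    · exact Y.edge_nonempty e he

/-- Direct sum of a set of (pairwise disjoint) hypergraphs; the null hypergraph when the
unions fail to be finite.  The direct sum of the empty set is the null hypergraph. -/
noncomputable def bigSum (A : Set (FinHypergraph V)) : FinHypergraph V :=
  if h : (⋃ X ∈ A, X.verts).Finite ∧ (⋃ X ∈ A, X.edges).Finite then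
    { verts := ⋃ X ∈ A, X.verts
      edges := ⋃ X ∈ A, X.edges
      verts_finite := h.1
      edges_finite := h.2
      edge_sub := by
        intro e he
        simp only [Set.mem_iUnion] at he
        obtain ⟨X, hX, heX⟩ := he
        intro v hv
        simp only [Set.mem_iUnion]
        exact ⟨X, hX, X.edge_sub e heX hv⟩
      edge_nonempty := by
        intro e he
        simp only [Set.mem_iUnion] at he
        obtain ⟨X, hX, heX⟩ := he
        exact X.edge_nonempty e heX }
  else Null

/-- The direct difference `X ⊖ Z`: the unique hypergraph `W` vertex disjoint from `Z`
with `X = W ⊕ Z`, when it exists. -/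
noncomputable def dDiff (X Z : FinHypergraph V) : FinHypergraph V :=
  if h : ∃ W : FinHypergraph V, Disjoint W.verts Z.verts ∧ X = dSum W Z then h.choose else X

/-- Two vertices are connected in `X` if there is a walk between them. -/
def Connected (X : FinHypergraph V) (a b : V) : Prop :=
  a ∈ X.verts ∧ Relation.ReflTransGen (fun u w => ∃ e ∈ X.edges, u ∈ e ∧ w ∈ e) a b

/-- `C` is a connected component of `X`: its vertex set is a connectivity class of `X`
and its edges are the edges of `X` lying inside it. -/
def IsComponent (X C : FinHypergraph V) : Prop :=
  (∃ v ∈ X.verts, C.verts = {w | Connected X v w}) ∧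
  C.edges = {e ∈ X.edges | e ⊆ C.verts}

/-- The set `𝒞(X)` of connected components of `X`. -/
def comps (X : FinHypergraph V) : Set (FinHypergraph V) := {C | IsComponent X C}

/-- Component disjointness: `𝒞(X) ∩ 𝒞(Y) = ∅`. -/
def CompDisjoint (X Y : FinHypergraph V) : Prop := comps X ∩ comps Y = ∅

/-- `X ∧ H`: the union (direct sum) of the components of `X` meeting some hyperedge in `H`. -/
noncomputable def wedge (X : FinHypergraph V) (H : Set (Set V)) : FinHypergraph V :=
  bigSum {C ∈ comps X | ∃ f ∈ H, (f ∩ C.verts).Nonempty}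

/-- `𝒮` is component maximal in `𝒳` with `𝒮`-maximal subsets given by `D`. -/
def IsMaximalSubsets (dom S : Set (FinHypergraph V))
    (D : FinHypergraph V → Set (FinHypergraph V)) : Prop :=
  ∀ X ∈ dom,
    D X ⊆ S ∧
    (D X).Pairwise CompDisjoint ∧
    (Null ∈ S → Null ∈ D X) ∧
    (∀ T ∈ D X, comps T ⊆ comps X) ∧
    (∀ s ∈ S, comps s ⊆ comps X → ∃ T ∈ D X, comps s ⊆ comps T)

/-- `𝒮_X := { S ∈ 𝒟_X | V(π(S)) ∩ V(X ⊖ S) = ∅ }`. -/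
noncomputable def SXof (π : FinHypergraph V → FinHypergraph V)
    (D : FinHypergraph V → Set (FinHypergraph V)) (X : FinHypergraph V) : Set (FinHypergraph V) :=
  {s ∈ D X | Disjoint (π s).verts (dDiff X s).verts}

/-- `(𝒳, π, 𝒮)` (with `𝒮`-maximal subsets `D`) is a hypergraph transformation:
nonredundancy, component maximality, and preservation of the direct sum decomposition. -/
def IsHGT (dom : Set (FinHypergraph V)) (π : FinHypergraph V → FinHypergraph V)
    (S : Set (FinHypergraph V)) (D : FinHypergraph V → Set (FinHypergraph V)) : Prop :=
  (∀ s ∈ S, comps s ∩ comps (π s) = ∅) ∧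
  (Null ∈ S → π Null ≠ Null) ∧
  IsMaximalSubsets dom S D ∧
  ∀ X ∈ dom,
    (π '' SXof π D X).Pairwise (fun A B => Disjoint A.verts B.verts) ∧
    Set.InjOn π (SXof π D X) ∧
    π X = dSum (dDiff X (bigSum (SXof π D X))) (bigSum (π '' SXof π D X))

/-- `𝒮'` is upward closed with respect to `𝒮`. -/
def UpwardClosed (S' S : Set (FinHypergraph V)) : Prop :=
  ∀ s ∈ S', ∀ t ∈ S, comps s ⊆ comps t → t ∈ S'

end FinHypergraph

open FinHypergraph

/-!
The 𝒮-maximal subsets of `X` depend only on which `T ∈ 𝒮` have all their components among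
those of `X`: if `T ∈ 𝒟_X`, then `T` lies in some `T' ∈ 𝒟_Y`, which lies in some
`T'' ∈ 𝒟_X`, and component disjointness of `𝒟_X` forces `T = T'' = T'`. Replacing `X'` by
`X''` changes the components of `X` only by components of `X'` and `X''`, which no `T ∈ 𝒮`
shares, so `𝒟_Y = 𝒟_X`. For `S ∈ 𝒟_X` the vertices of `Y ⊖ S` and `X ⊖ S` differ only by
vertices of `X'` and `X''`, which `π(S)` avoids, so `𝒮_Y = 𝒮_X`.
-/

lemma Set.subset_union_iff_of_disjoint {α : Type*} {s t u : Set α} (h : Disjoint s u) :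
    s ⊆ t ∪ u ↔ s ⊆ t :=
  ⟨fun hs => h.subset_left_of_subset_union hs, fun hs => hs.trans Set.subset_union_left⟩

lemma Set.disjoint_union_sdiff_iff_of_disjoint {α : Type*} {p s t u : Set α} (h : Disjoint p t) :
    Disjoint p ((s ∪ t) \ u) ↔ Disjoint p (s \ u) := by
  rw [Set.union_sdiff_distrib, Set.disjoint_union_right,
    and_iff_left (h.mono_right Set.sdiff_subset)]

namespace FinHypergraph

variable {V : Type u}

lemma ext {X Y : FinHypergraph V} (hv : X.verts = Y.verts) (he : X.edges = Y.edges) : X = Y := by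
  cases X; cases Y; simp_all

namespace Connected

variable {X : FinHypergraph V} {a b c : V}

lemma mem_right (h : Connected X a b) : b ∈ X.verts := by
  obtain ⟨ha, h⟩ := h
  induction h with
  | refl => exact ha
  | tail _ hstep => obtain ⟨e, he, -, hbe⟩ := hstep; exact X.edge_sub e he hbe

lemma symm (h : Connected X a b) : Connected X b a := by
  have : Std.Symm fun u w => ∃ e ∈ X.edges, u ∈ e ∧ w ∈ e :=
    ⟨fun _ _ ⟨e, he, hu, hw⟩ => ⟨e, he, hw, hu⟩⟩
  exact ⟨h.mem_right, Std.Symm.symm _ _ h.2⟩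

lemma trans (h₁ : Connected X a b) (h₂ : Connected X b c) : Connected X a c :=
  ⟨h₁.1, h₁.2.trans h₂.2⟩

end Connected

def compOf (X : FinHypergraph V) (v : V) : FinHypergraph V where
  verts := {w | Connected X v w}
  edges := {e ∈ X.edges | e ⊆ {w | Connected X v w}}
  verts_finite := X.verts_finite.subset fun _ hw => hw.mem_right
  edges_finite := X.edges_finite.subset fun _ he => he.1
  edge_sub := fun _ he => he.2
  edge_nonempty := fun e he => X.edge_nonempty e he.1

variable {X Y Z W C s : FinHypergraph V} {e : Set V} {v w : V}

lemma mem_comps_iff : C ∈ comps X ↔ ∃ v ∈ X.verts, C = compOf X v := by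
  constructor
  · rintro ⟨⟨v, hv, hverts⟩, hedges⟩
    exact ⟨v, hv, ext hverts (by rw [hedges, hverts]; rfl)⟩
  · rintro ⟨v, hv, rfl⟩
    exact ⟨⟨v, hv, rfl⟩, rfl⟩

lemma compOf_mem_comps (hv : v ∈ X.verts) : compOf X v ∈ comps X :=
  mem_comps_iff.2 ⟨v, hv, rfl⟩

lemma mem_compOf_self (hv : v ∈ X.verts) : v ∈ (compOf X v).verts :=
  ⟨hv, .refl⟩

lemma compOf_eq_of_connected (h : Connected X v w) : compOf X v = compOf X w := by
  have hverts : {u | Connected X v u} = {u | Connected X w u} :=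
    Set.ext fun _ => ⟨h.symm.trans, h.trans⟩
  exact ext hverts (by simp only [compOf, hverts])

lemma verts_subset_of_mem_comps (hC : C ∈ comps X) : C.verts ⊆ X.verts := by
  obtain ⟨v, -, rfl⟩ := mem_comps_iff.1 hC
  exact fun _ hw => hw.mem_right

lemma edges_subset_of_mem_comps (hC : C ∈ comps X) : C.edges ⊆ X.edges := by
  obtain ⟨v, -, rfl⟩ := mem_comps_iff.1 hC
  exact fun _ he => he.1

lemma edge_mem_of_mem_comps (hC : C ∈ comps X) (he : e ∈ X.edges) (hve : v ∈ e)
    (hvC : v ∈ C.verts) : e ∈ C.edges := by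
  obtain ⟨u, -, rfl⟩ := mem_comps_iff.1 hC
  rw [compOf_eq_of_connected hvC]
  exact ⟨he, fun w hw => ⟨X.edge_sub e he hve, .single ⟨e, he, hve, hw⟩⟩⟩

lemma verts_eq_biUnion_comps (X : FinHypergraph V) : X.verts = ⋃ C ∈ comps X, C.verts :=
  Set.Subset.antisymm (fun _ hv => Set.mem_biUnion (compOf_mem_comps hv) (mem_compOf_self hv))
    (Set.iUnion₂_subset fun _ hC => verts_subset_of_mem_comps hC)

lemma edges_eq_biUnion_comps (X : FinHypergraph V) : X.edges = ⋃ C ∈ comps X, C.edges := by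
  refine Set.Subset.antisymm (fun e he => ?_)
    (Set.iUnion₂_subset fun _ hC => edges_subset_of_mem_comps hC)
  obtain ⟨v, hve⟩ := X.edge_nonempty e he
  have hv := X.edge_sub e he hve
  exact Set.mem_biUnion (compOf_mem_comps hv)
    (edge_mem_of_mem_comps (compOf_mem_comps hv) he hve (mem_compOf_self hv))

lemma eq_of_comps_eq (h : comps X = comps Y) : X = Y :=
  ext (by rw [verts_eq_biUnion_comps X, verts_eq_biUnion_comps Y, h])
    (by rw [edges_eq_biUnion_comps X, edges_eq_biUnion_comps Y, h])

lemma eq_null_of_comps_eq_empty (h : comps X = ∅) : X = Null :=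
  ext (by rw [verts_eq_biUnion_comps X, h]; simp [Null])
    (by rw [edges_eq_biUnion_comps X, h]; simp [Null])

lemma dSum_comm (W Z : FinHypergraph V) : dSum W Z = dSum Z W :=
  ext (Set.union_comm _ _) (Set.union_comm _ _)

lemma sep_edges_dSum_of_subset_left (hWZ : Disjoint W.verts Z.verts) {U : Set V}
    (hU : U ⊆ W.verts) : {e ∈ (dSum W Z).edges | e ⊆ U} = {e ∈ W.edges | e ⊆ U} := by
  ext e
  refine ⟨fun ⟨he, heU⟩ => ⟨he.resolve_right fun heZ => ?_, heU⟩,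
    fun ⟨he, heU⟩ => ⟨Or.inl he, heU⟩⟩
  obtain ⟨x, hx⟩ := Z.edge_nonempty e heZ
  exact Set.disjoint_left.1 hWZ (hU (heU hx)) (Z.edge_sub e heZ hx)

lemma connected_dSum_iff_left (hWZ : Disjoint W.verts Z.verts) (hv : v ∈ W.verts) :
    Connected (dSum W Z) v w ↔ Connected W v w := by
  constructor
  · rintro ⟨-, hw⟩
    refine ⟨hv, ?_⟩
    induction hw with
    | refl => exact .refl
    | @tail b c _ hstep ih =>
      obtain ⟨e, he, hbe, hce⟩ := hstep
      have hb : b ∈ W.verts := Connected.mem_right ⟨hv, ih⟩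
      exact ih.tail ⟨e, he.resolve_right fun heZ =>
        Set.disjoint_left.1 hWZ hb (Z.edge_sub e heZ hbe), hbe, hce⟩
  · rintro ⟨-, hw⟩
    exact ⟨Or.inl hv,
      Relation.ReflTransGen.mono (fun _ _ ⟨e, he, hae, hbe⟩ => ⟨e, Or.inl he, hae, hbe⟩) _ _ hw⟩

lemma compOf_dSum_left (hWZ : Disjoint W.verts Z.verts) (hv : v ∈ W.verts) :
    compOf (dSum W Z) v = compOf W v := by
  have hverts : {w | Connected (dSum W Z) v w} = {w | Connected W v w} :=
    Set.ext fun _ => connected_dSum_iff_left hWZ hv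
  refine ext hverts ?_
  change {e ∈ (dSum W Z).edges | e ⊆ _} = _
  rw [hverts]
  exact sep_edges_dSum_of_subset_left hWZ (verts_subset_of_mem_comps (compOf_mem_comps hv))

lemma comps_dSum (hWZ : Disjoint W.verts Z.verts) : comps (dSum W Z) = comps W ∪ comps Z := by
  have hright : ∀ v ∈ Z.verts, compOf (dSum W Z) v = compOf Z v := fun v hv => by
    rw [dSum_comm]; exact compOf_dSum_left hWZ.symm hv
  ext C
  simp only [Set.mem_union, mem_comps_iff]
  constructor
  · rintro ⟨v, hv | hv, rfl⟩
    · exact Or.inl ⟨v, hv, compOf_dSum_left hWZ hv⟩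
    · exact Or.inr ⟨v, hv, hright v hv⟩
  · rintro (⟨v, hv, rfl⟩ | ⟨v, hv, rfl⟩)
    · exact ⟨v, Or.inl hv, (compOf_dSum_left hWZ hv).symm⟩
    · exact ⟨v, Or.inr hv, (hright v hv).symm⟩

lemma eq_of_dSum_eq_dSum {W₁ W₂ : FinHypergraph V} (h₁ : Disjoint W₁.verts Z.verts)
    (h₂ : Disjoint W₂.verts Z.verts) (h : dSum W₁ Z = dSum W₂ Z) : W₁ = W₂ := by
  have hverts : W₁.verts = W₂.verts := by
    have hdiff := congrArg (fun X => X.verts \ Z.verts) h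
    simpa only [dSum, Set.union_sdiff_cancel_right h₁.inter_eq.le,
      Set.union_sdiff_cancel_right h₂.inter_eq.le] using hdiff
  have hedges (W : FinHypergraph V) (hW : Disjoint W.verts Z.verts) :
      {e ∈ (dSum W Z).edges | e ⊆ W.verts} = W.edges :=
    (sep_edges_dSum_of_subset_left hW subset_rfl).trans
      (Set.sep_eq_self_iff_mem_true.2 W.edge_sub)
  refine ext hverts ?_
  calc W₁.edges = {e ∈ (dSum W₁ Z).edges | e ⊆ W₁.verts} := (hedges W₁ h₁).symm
    _ = {e ∈ (dSum W₂ Z).edges | e ⊆ W₂.verts} := by rw [h, hverts]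
    _ = W₂.edges := hedges W₂ h₂

lemma dDiff_eq (hWZ : Disjoint W.verts Z.verts) (hX : X = dSum W Z) : dDiff X Z = W := by
  have hex : ∃ W', Disjoint W'.verts Z.verts ∧ X = dSum W' Z := ⟨W, hWZ, hX⟩
  rw [dDiff, dif_pos hex]
  exact eq_of_dSum_eq_dSum hex.choose_spec.1 hWZ (hex.choose_spec.2.symm.trans hX)

section ComponentsSubset

variable (h : comps s ⊆ comps X)
include h

lemma verts_subset_of_comps_subset : s.verts ⊆ X.verts := by
  rw [verts_eq_biUnion_comps s]
  exact Set.iUnion₂_subset fun _ hC => verts_subset_of_mem_comps (h hC)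

lemma edges_subset_of_comps_subset : s.edges ⊆ X.edges := by
  rw [edges_eq_biUnion_comps s]
  exact Set.iUnion₂_subset fun _ hC => edges_subset_of_mem_comps (h hC)

lemma mem_edges_of_comps_subset (he : e ∈ X.edges) (hve : v ∈ e) (hvs : v ∈ s.verts) :
    e ∈ s.edges := by
  rw [verts_eq_biUnion_comps s, Set.mem_iUnion₂] at hvs
  obtain ⟨C, hC, hvC⟩ := hvs
  exact edges_subset_of_mem_comps hC (edge_mem_of_mem_comps (h hC) he hve hvC)

lemma exists_dSum_eq_of_comps_subset :
    ∃ W : FinHypergraph V, Disjoint W.verts s.verts ∧ X = dSum W s := by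
  refine ⟨⟨X.verts \ s.verts, {e ∈ X.edges | e ⊆ X.verts \ s.verts}, X.verts_finite.sdiff,
    X.edges_finite.sep _, fun _ he => he.2, fun e he => X.edge_nonempty e he.1⟩,
    Set.disjoint_sdiff_left,
    ext (Set.sdiff_union_of_subset (verts_subset_of_comps_subset h)).symm ?_⟩
  ext e
  refine ⟨fun he => ?_, ?_⟩
  · by_cases hes : e ⊆ X.verts \ s.verts
    · exact Or.inl ⟨he, hes⟩
    · obtain ⟨v, hve, hv⟩ := Set.not_subset.1 hes
      exact Or.inr (mem_edges_of_comps_subset h he hve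
        (not_not.1 fun hvs => hv ⟨X.edge_sub e he hve, hvs⟩))
  · rintro (⟨he, -⟩ | he)
    · exact he
    · exact edges_subset_of_comps_subset h he

lemma disjoint_verts_dDiff : Disjoint (dDiff X s).verts s.verts := by
  obtain ⟨W, hWs, hX⟩ := exists_dSum_eq_of_comps_subset h
  rwa [dDiff_eq hWs hX]

lemma dSum_dDiff : dSum (dDiff X s) s = X := by
  obtain ⟨W, hWs, hX⟩ := exists_dSum_eq_of_comps_subset h
  rw [dDiff_eq hWs hX, hX]

lemma verts_dDiff : (dDiff X s).verts = X.verts \ s.verts := by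
  conv_rhs => rw [← dSum_dDiff h]
  exact (Set.union_sdiff_cancel_right (disjoint_verts_dDiff h).inter_eq.le).symm

lemma comps_eq_comps_dDiff_union : comps X = comps (dDiff X s) ∪ comps s := by
  conv_lhs => rw [← dSum_dDiff h]
  exact comps_dSum (disjoint_verts_dDiff h)

end ComponentsSubset

namespace IsMaximalSubsets

variable {dom S : Set (FinHypergraph V)} {D : FinHypergraph V → Set (FinHypergraph V)}
  {A B : FinHypergraph V}

lemma subset_of_forall_comps_subset_iff (hD : IsMaximalSubsets dom S D) (hA : A ∈ dom)
    (hB : B ∈ dom) (hAB : ∀ T ∈ S, comps T ⊆ comps A ↔ comps T ⊆ comps B) : D A ⊆ D B := by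
  obtain ⟨hDA_S, hDA_pair, -, hDA_sub, hDA_max⟩ := hD A hA
  obtain ⟨hDB_S, -, hDB_null, hDB_sub, hDB_max⟩ := hD B hB
  intro T hTA
  have hTS := hDA_S hTA
  obtain ⟨T', hT'B, hTT'⟩ := hDB_max T hTS ((hAB T hTS).1 (hDA_sub T hTA))
  have hT'S := hDB_S hT'B
  obtain ⟨T'', hT''A, hT'T''⟩ := hDA_max T' hT'S ((hAB T' hT'S).2 (hDB_sub T' hT'B))
  rcases Set.eq_empty_or_nonempty (comps T) with hT | ⟨c, hc⟩
  · rw [eq_null_of_comps_eq_empty hT] at hTS ⊢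
    exact hDB_null hTS
  have hTT'' : T = T'' := by
    by_contra hne
    have hmem : c ∈ comps T ∩ comps T'' := ⟨hc, hT'T'' (hTT' hc)⟩
    rw [hDA_pair hTA hT''A hne] at hmem
    exact hmem
  subst hTT''
  rwa [eq_of_comps_eq (hTT'.antisymm hT'T'')]

lemma eq_of_forall_comps_subset_iff (hD : IsMaximalSubsets dom S D) (hA : A ∈ dom)
    (hB : B ∈ dom) (hAB : ∀ T ∈ S, comps T ⊆ comps A ↔ comps T ⊆ comps B) : D A = D B :=
  (hD.subset_of_forall_comps_subset_iff hA hB hAB).antisymm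
    (hD.subset_of_forall_comps_subset_iff hB hA fun T hT => (hAB T hT).symm)

end IsMaximalSubsets

end FinHypergraph

theorem stmt10_general {V : Type u} (dom S : Set (FinHypergraph V))
    (π : FinHypergraph V → FinHypergraph V) (D : FinHypergraph V → Set (FinHypergraph V))
    (hT : IsHGT dom π S D)
    (X X' X'' : FinHypergraph V) (hX : X ∈ dom)
    (hX' : comps X' ⊆ comps X)
    (hX'' : Disjoint X''.verts (dDiff X X').verts)
    (hY : dSum (dDiff X X') X'' ∈ dom)
    (hScomp : ∀ s ∈ S, CompDisjoint s X' ∧ CompDisjoint s X'')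
    (hSvert : ∀ s ∈ S, Disjoint (π s).verts X'.verts ∧ Disjoint (π s).verts X''.verts) :
    D (dSum (dDiff X X') X'') = D X ∧
    SXof π D (dSum (dDiff X X') X'') = SXof π D X := by
  have hD := hT.2.2.1
  have hcomps : ∀ T ∈ S, comps T ⊆ comps (dSum (dDiff X X') X'') ↔ comps T ⊆ comps X := by
    intro T hTS
    obtain ⟨hTX', hTX''⟩ := hScomp T hTS
    rw [comps_dSum hX''.symm, comps_eq_comps_dDiff_union hX',
      Set.subset_union_iff_of_disjoint (Set.disjoint_iff_inter_eq_empty.2 hTX'),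
      Set.subset_union_iff_of_disjoint (Set.disjoint_iff_inter_eq_empty.2 hTX'')]
  have hDY := hD.eq_of_forall_comps_subset_iff hY hX hcomps
  refine ⟨hDY, Set.ext fun s => ?_⟩
  simp only [SXof, Set.mem_sep_iff, hDY]
  refine and_congr_right fun hs => ?_
  obtain ⟨hDS, -, -, hDcomps, -⟩ := hD X hX
  have hsX := hDcomps s hs
  obtain ⟨hπX', hπX''⟩ := hSvert s (hDS hs)
  have hXverts : X.verts = (dDiff X X').verts ∪ X'.verts :=
    congrArg verts (dSum_dDiff hX').symm
  rw [verts_dDiff hsX, verts_dDiff ((hcomps s (hDS hs)).2 hsX), hXverts]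
  exact (Set.disjoint_union_sdiff_iff_of_disjoint hπX'').trans
    (Set.disjoint_union_sdiff_iff_of_disjoint hπX').symm

theorem stmt10 {V : Type u} (dom S : Set (FinHypergraph V))
    (π : FinHypergraph V → FinHypergraph V) (D : FinHypergraph V → Set (FinHypergraph V))
    (hsub : S ⊆ dom) (hT : IsHGT dom π S D)
    (X X' X'' : FinHypergraph V) (hX : X ∈ dom)
    (hX' : comps X' ⊆ comps X)
    (hX'' : Disjoint X''.verts (dDiff X X').verts)
    (hY : dSum (dDiff X X') X'' ∈ dom)
    (hScomp : ∀ s ∈ S, CompDisjoint s X' ∧ CompDisjoint s X'')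
    (hSvert : ∀ s ∈ S, Disjoint (π s).verts X'.verts ∧ Disjoint (π s).verts X''.verts) :
    D (dSum (dDiff X X') X'') = D X ∧
    SXof π D (dSum (dDiff X X') X'') = SXof π D X :=
  stmt10_general dom S π D hT X X' X'' hX hX' hX'' hY hScomp hSvert
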